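/- arXiv:2105.07762 — 2 statements merged into one kernel-verified Lean document; each statement's English description precedes it below -/
import Mathlib

section
/- Let V > 0, ω₀ > 0, α = 2π/3, and define the balanced three-phase voltage curve v : ℝ → ℝ³ by v(t) = (V sin(ω₀ t), V sin(ω₀ t − α), V sin(ω₀ t + α)). Then for every t: ‖v(t)‖² = (3/2)V², ρ_v(t) = 0, and ω_v(t) = ω₀. -/
open scoped RealInnerProductSpace

/-- The wedge product `x ∧ y` of two vectors in `ℝⁿ`: the skew-symmetric
matrix with entries `b i j = x i * y j - x j * y i`. -/
noncomputable def wedge {n : ℕ} (x y : EuclideanSpace ℝ (Fin n)) :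
    Matrix (Fin n) (Fin n) ℝ :=
  Matrix.of fun i j => x i * y j - x j * y i

/-- The magnitude of a bivector (skew-symmetric matrix):
`√(Σ_{i<j} B i j ^ 2)`. -/
noncomputable def bivecNorm {n : ℕ} (B : Matrix (Fin n) (Fin n) ℝ) : ℝ :=
  Real.sqrt (∑ i : Fin n, ∑ j : Fin n, if i < j then (B i j) ^ 2 else 0)

/-- The magnitude of the wedge product `|x ∧ y| = √(Σ_{i<j} b_{ij}²)`. -/
noncomputable def wedgeNorm {n : ℕ} (x y : EuclideanSpace ℝ (Fin n)) : ℝ :=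
  bivecNorm (wedge x y)

/-- Symmetric component of the generalized frequency:
`ρ_v(t) = ⟪v t, v' t⟫ / ‖v t‖²`. -/
noncomputable def rho {n : ℕ} (v : ℝ → EuclideanSpace ℝ (Fin n)) (t : ℝ) : ℝ :=
  ⟪v t, deriv v t⟫ / ‖v t‖ ^ 2

/-- Magnitude component of the generalized frequency:
`ω_v(t) = |v t ∧ v' t| / ‖v t‖²`. -/
noncomputable def omegaF {n : ℕ} (v : ℝ → EuclideanSpace ℝ (Fin n)) (t : ℝ) : ℝ :=
  wedgeNorm (v t) (deriv v t) / ‖v t‖ ^ 2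

/-- for the balanced three-phase voltage
`v t = (V sin(ω₀ t), V sin(ω₀ t − 2π/3), V sin(ω₀ t + 2π/3))` with `V > 0` and
`ω₀ > 0`, one has `‖v t‖² = (3/2) V²`, `ρ_v(t) = 0` and `ω_v(t) = ω₀` for
every `t`. -/
theorem threePhase_generalized_frequency (V ω₀ : ℝ) (hV : 0 < V) (hω : 0 < ω₀)
    (v : ℝ → EuclideanSpace ℝ (Fin 3))
    (hv : v = fun s => (WithLp.equiv 2 (Fin 3 → ℝ)).symm
      ![V * Real.sin (ω₀ * s),
        V * Real.sin (ω₀ * s - 2 * Real.pi / 3),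
        V * Real.sin (ω₀ * s + 2 * Real.pi / 3)]) :
    ∀ t : ℝ, ‖v t‖ ^ 2 = 3 / 2 * V ^ 2 ∧ rho v t = 0 ∧ omegaF v t = ω₀ := by
  intro t
  have h23 : 2 * Real.pi / 3 = Real.pi - Real.pi / 3 := by ring
  have hcos : Real.cos (2 * Real.pi / 3) = -(1/2) := by
    rw [h23, Real.cos_pi_sub, Real.cos_pi_div_three]
  have hsin : Real.sin (2 * Real.pi / 3) = Real.sqrt 3 / 2 := by
    rw [h23, Real.sin_pi_sub, Real.sin_pi_div_three]
  have hpy : Real.sin (ω₀ * t) ^ 2 + Real.cos (ω₀ * t) ^ 2 = 1 :=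
    Real.sin_sq_add_cos_sq _
  have hsq3 : Real.sqrt 3 ^ 2 = 3 := Real.sq_sqrt (by norm_num)
  -- the derivative
  have hbase : ∀ c : ℝ, HasDerivAt (fun x : ℝ => ω₀ * x + c) ω₀ t := by
    intro c
    simpa using ((hasDerivAt_id t).const_mul ω₀).add_const c
  have hcomp : ∀ c : ℝ, HasDerivAt (fun x : ℝ => V * Real.sin (ω₀ * x + c))
      (V * (Real.cos (ω₀ * t + c) * ω₀)) t := by
    intro c
    exact ((Real.hasDerivAt_sin (ω₀ * t + c)).comp t (hbase c)).const_mul V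
  have hf : HasDerivAt (fun s : ℝ =>
      (![V * Real.sin (ω₀ * s),
        V * Real.sin (ω₀ * s - 2 * Real.pi / 3),
        V * Real.sin (ω₀ * s + 2 * Real.pi / 3)] : Fin 3 → ℝ))
      (![V * (Real.cos (ω₀ * t) * ω₀),
        V * (Real.cos (ω₀ * t - 2 * Real.pi / 3) * ω₀),
        V * (Real.cos (ω₀ * t + 2 * Real.pi / 3) * ω₀)]) t := by
    rw [hasDerivAt_pi]
    intro i
    fin_cases i
    · simpa using hcomp 0
    · simpa [sub_eq_add_neg] using hcomp (-(2 * Real.pi / 3))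
    · simpa using hcomp (2 * Real.pi / 3)
  have hd : HasDerivAt v ((WithLp.equiv 2 (Fin 3 → ℝ)).symm
      ![V * (Real.cos (ω₀ * t) * ω₀),
        V * (Real.cos (ω₀ * t - 2 * Real.pi / 3) * ω₀),
        V * (Real.cos (ω₀ * t + 2 * Real.pi / 3) * ω₀)]) t := by
    rw [hv]
    exact ((PiLp.continuousLinearEquiv 2 ℝ (fun _ : Fin 3 => ℝ)).symm.hasFDerivAt).comp_hasDerivAt t hf
  have hdv : deriv v t = (WithLp.equiv 2 (Fin 3 → ℝ)).symm
      ![V * (Real.cos (ω₀ * t) * ω₀),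
        V * (Real.cos (ω₀ * t - 2 * Real.pi / 3) * ω₀),
        V * (Real.cos (ω₀ * t + 2 * Real.pi / 3) * ω₀)] := hd.deriv
  -- norm squared
  have hn2 : ‖v t‖ ^ 2 = 3 / 2 * V ^ 2 := by
    rw [← real_inner_self_eq_norm_sq, PiLp.inner_apply]
    simp only [hv, RCLike.inner_apply, conj_trivial, Fin.sum_univ_three,
      WithLp.equiv_symm_apply, PiLp.toLp_apply, Matrix.cons_val_zero, Matrix.cons_val_one,
      Matrix.head_cons, Matrix.cons_val_two, Matrix.tail_cons]
    rw [Real.sin_sub, Real.sin_add, hcos, hsin]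
    linear_combination (3/2*V^2) * hpy + (V^2 * Real.cos (ω₀*t)^2 / 2) * hsq3
  refine ⟨hn2, ?_, ?_⟩
  · -- rho
    rw [rho, hn2, PiLp.inner_apply, hdv]
    simp only [hv, RCLike.inner_apply, conj_trivial, Fin.sum_univ_three,
      WithLp.equiv_symm_apply, PiLp.toLp_apply, Matrix.cons_val_zero, Matrix.cons_val_one,
      Matrix.head_cons, Matrix.cons_val_two, Matrix.tail_cons]
    rw [Real.sin_sub, Real.sin_add, Real.cos_sub, Real.cos_add, hcos, hsin]
    have : (V * Real.sin (ω₀ * t)) * (V * (Real.cos (ω₀ * t) * ω₀)) +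
        (V * (Real.sin (ω₀ * t) * -(1/2) - Real.cos (ω₀ * t) * (Real.sqrt 3 / 2))) *
          (V * ((Real.cos (ω₀ * t) * -(1/2) + Real.sin (ω₀ * t) * (Real.sqrt 3 / 2)) * ω₀)) +
        (V * (Real.sin (ω₀ * t) * -(1/2) + Real.cos (ω₀ * t) * (Real.sqrt 3 / 2))) *
          (V * ((Real.cos (ω₀ * t) * -(1/2) - Real.sin (ω₀ * t) * (Real.sqrt 3 / 2)) * ω₀)) = 0 := by
      linear_combination (-(V^2 * ω₀ * Real.sin (ω₀*t) * Real.cos (ω₀*t) / 2)) * hsq3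
    rw [mul_comm (V * (Real.cos (ω₀ * t) * ω₀)), mul_comm (V * ((Real.cos (ω₀ * t) * -(1/2) + _) * ω₀)),
      mul_comm (V * ((Real.cos (ω₀ * t) * -(1/2) - _) * ω₀)), this]
    simp
  · -- omega
    rw [omegaF, hn2, wedgeNorm, bivecNorm, hdv]
    have hsum : (∑ i : Fin 3, ∑ j : Fin 3, if i < j then
        ((wedge (v t) ((WithLp.equiv 2 (Fin 3 → ℝ)).symm
          ![V * (Real.cos (ω₀ * t) * ω₀),
            V * (Real.cos (ω₀ * t - 2 * Real.pi / 3) * ω₀),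
            V * (Real.cos (ω₀ * t + 2 * Real.pi / 3) * ω₀)])) i j) ^ 2 else 0)
        = (3 / 2 * V ^ 2 * ω₀) ^ 2 := by
      simp only [hv, wedge, Matrix.of_apply, Fin.sum_univ_three,
        WithLp.equiv_symm_apply, PiLp.toLp_apply, Matrix.cons_val_zero, Matrix.cons_val_one,
        Matrix.head_cons, Matrix.cons_val_two, Matrix.tail_cons]
      norm_num [Fin.lt_def]
      rw [Real.sin_sub, Real.sin_add, Real.cos_sub, Real.cos_add, hcos, hsin]
      linear_combination (3/4 * V^4 * ω₀^2 * (Real.sin (ω₀*t)^2 + Real.cos (ω₀*t)^2)^2) * hsq3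
        + (9/4 * V^4 * ω₀^2 * (Real.sin (ω₀*t)^2 + Real.cos (ω₀*t)^2 + 1)) * hpy
    rw [hsum, Real.sqrt_sq (by positivity)]
    field_simp
end

section
/- Let v : ℝ → ℝⁿ be differentiable at t with v(t) ≠ 0, let C > 0 be a constant, and suppose the current through a balanced capacitive element is i(t) = C·v'(t). Let p(t) = ⟨v(t), i(t)⟩ be the instantaneous active power and Q(t) = i(t) ∧ v(t) the generalized instantaneous reactive power bivector. Then the generalized frequency of the voltage is expressible from instantaneous voltage and current measurements: ρ_v(t) = p(t)/(C‖v(t)‖²), the frequency bivector satisfies (v(t) ∧ v'(t))/‖v(t)‖² = −Q(t)/(C‖v(t)‖²), and ω_v(t) = |Q(t)|/(C‖v(t)‖²). -/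
open scoped RealInnerProductSpace

/-- for a balanced capacitive element with current
`i t = C • v' t`, instantaneous active power `p t = ⟪v t, i t⟫` and
generalized instantaneous reactive power bivector `Q t = i t ∧ v t`, the
generalized frequency of the voltage is obtained from instantaneous voltage
and current measurements: `ρ_v(t) = p t / (C ‖v t‖²)`, the frequency bivector
equals `−Q t / (C ‖v t‖²)`, and `ω_v(t) = |Q t| / (C ‖v t‖²)`. -/
theorem capacitive_generalized_frequency {n : ℕ}
    (v : ℝ → EuclideanSpace ℝ (Fin n)) (t : ℝ) (C : ℝ)
    (hv : DifferentiableAt ℝ v t) (hvt : v t ≠ 0) (hC : 0 < C)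
    (i : ℝ → EuclideanSpace ℝ (Fin n)) (hi : i = fun s => C • deriv v s) :
    rho v t = ⟪v t, i t⟫ / (C * ‖v t‖ ^ 2) ∧
      (‖v t‖ ^ 2)⁻¹ • wedge (v t) (deriv v t) =
        -((C * ‖v t‖ ^ 2)⁻¹ • wedge (i t) (v t)) ∧
      omegaF v t = bivecNorm (wedge (i t) (v t)) / (C * ‖v t‖ ^ 2) := by
  subst hi
  have hvn : (0:ℝ) < ‖v t‖ ^ 2 := pow_pos (norm_pos_iff.mpr hvt) 2
  have hCn : C ≠ 0 := ne_of_gt hC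
  have hw : wedge (C • deriv v t) (v t) = (-C) • wedge (v t) (deriv v t) := by
    ext a b
    simp [wedge, Matrix.smul_apply, PiLp.smul_apply, smul_eq_mul]
    ring
  refine ⟨?_, ?_, ?_⟩
  · rw [rho, real_inner_smul_right]
    field_simp
  · rw [hw, smul_smul]
    rw [← neg_smul]
    congr 1
    field_simp
  · rw [omegaF, wedgeNorm, hw]
    have : bivecNorm ((-C) • wedge (v t) (deriv v t)) =
        C * bivecNorm (wedge (v t) (deriv v t)) := by
      rw [bivecNorm, bivecNorm]
      have hsum : (∑ a : Fin n, ∑ b : Fin n, if a < b then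
            (((-C) • wedge (v t) (deriv v t)) a b) ^ 2 else 0) =
          C ^ 2 * ∑ a : Fin n, ∑ b : Fin n, if a < b then
            (wedge (v t) (deriv v t) a b) ^ 2 else 0 := by
        rw [Finset.mul_sum]
        refine Finset.sum_congr rfl fun a _ => ?_
        rw [Finset.mul_sum]
        refine Finset.sum_congr rfl fun b _ => ?_
        split <;> simp [Matrix.smul_apply, smul_eq_mul] <;> ring
      rw [hsum, Real.sqrt_mul (by positivity), Real.sqrt_sq hC.le]
    rw [this]
    field_simp
end
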